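/- Consider gradient flow on a depth-L matrix factorization (L ≥ 2) for the 2×2 matrix-completion loss with balanced initialization, and assume det(W_{L:1}(0)) > 0. Then for every t ≥ 0, the Frobenius distance of the product matrix from the set of matrices of rank at most 1 satisfies D(W_{L:1}(t), M₁) ≤ 3√2·√(ℓ(t)). -/

import Mathlib

/-!
Gradient flow conserves balancedness `W_{l+1}ᵀ W_{l+1} = W_l W_lᵀ`, so the end-to-end matrix
`A = W_{L:1}` satisfies `A Aᵀ = M^L` for `M = W_L W_Lᵀ`. Jacobi's formula and Cauchy–Schwarz
give `|(det M)'| ≤ c(t) det M` with `c` continuous, so by Grönwall `det M` never reaches zero;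
since `(det A)² = (det M)^L`, `det A` never vanishes and by continuity stays positive. For a
2×2 matrix with positive determinant, either the loss is large and dropping the second column
is a good enough rank-one approximation, or `A₁₂` and `A₂₁` are close to `1`, hence
`A₁₂ A₂₁ > 0`, and the rank-one matrix sharing the first row and column of `A` misses it by
`det A / A₁₁`, which is at most `|A₂₂|`.
-/

open Matrix

/-- The matrix-completion loss `ℓ(W) = ½[(W₁₂−1)² + (W₂₁−1)² + W₂₂²]`. -/
noncomputable def mcLoss (A : Matrix (Fin 2) (Fin 2) ℝ) : ℝ :=
  (1 / 2) * ((A 0 1 - 1) ^ 2 + (A 1 0 - 1) ^ 2 + A 1 1 ^ 2)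

/-- The gradient of the loss: `∇ℓ(W) = [[0, W₁₂ − 1], [W₂₁ − 1, W₂₂]]`. -/
noncomputable def mcGrad (A : Matrix (Fin 2) (Fin 2) ℝ) : Matrix (Fin 2) (Fin 2) ℝ :=
  !![0, A 0 1 - 1; A 1 0 - 1, A 1 1]

/-- Frobenius norm of a real matrix. -/
noncomputable def frobNorm {m n : ℕ} (A : Matrix (Fin m) (Fin n) ℝ) : ℝ :=
  Real.sqrt (∑ i, ∑ j, A i j ^ 2)

/-- Frobenius distance of a 2×2 matrix from the set `M₁` of matrices of rank at most `1`. -/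
noncomputable def distRank1 (A : Matrix (Fin 2) (Fin 2) ℝ) : ℝ :=
  sInf {r : ℝ | ∃ M : Matrix (Fin 2) (Fin 2) ℝ, M.rank ≤ 1 ∧ r = frobNorm (A - M)}

open Set

section Calculus

theorem apply_eq_apply_zero_of_hasDerivAt_zero {f : ℝ → ℝ}
    (hf : ∀ t, 0 ≤ t → HasDerivAt f 0 t) {t : ℝ} (ht : 0 ≤ t) : f t = f 0 :=
  constant_of_has_deriv_right_zero (fun s hs => (hf s hs.1).continuousAt.continuousWithinAt)
    (fun s hs => (hf s hs.1).hasDerivWithinAt) t ⟨ht, le_rfl⟩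

theorem pos_of_abs_deriv_le_mul_self {f φ c : ℝ → ℝ}
    (hf : ∀ t, 0 ≤ t → HasDerivAt f (φ t) t) (hf_nonneg : ∀ t, 0 ≤ t → 0 ≤ f t)
    (hφ : ∀ t, 0 ≤ t → |φ t| ≤ c t * f t) (hc : Continuous fun t : Ici (0 : ℝ) => c t)
    (h0 : 0 < f 0) {t : ℝ} (ht : 0 ≤ t) : 0 < f t := by
  obtain ⟨C, hC⟩ : ∃ C, ∀ s ∈ Icc 0 t, ‖c s‖ ≤ C :=
    isCompact_Icc.exists_bound_of_continuousOn
      ((continuousOn_iff_continuous_domRestrict.2 hc).mono Icc_subset_Ici_self)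
  refine (hf_nonneg t ht).lt_of_ne fun hft => h0.ne' ?_
  -- Grönwall's uniqueness argument, run backwards in time from the zero at `t`.
  have hback := eq_zero_of_abs_deriv_le_mul_abs_self_of_eq_zero_right (f := fun s => f (t - s))
    (f' := fun s => -φ (t - s)) (K := C) (a := 0) (b := t)
    (fun s hs => (hf _ (by linarith [hs.2])).continuousAt.comp
      (continuous_sub_left t).continuousAt |>.continuousWithinAt)
    (fun s hs => by
      have := (hf (t - s) (by linarith [hs.2])).scomp s ((hasDerivAt_id s).const_sub t)
      simpa [Function.comp_def] using this.hasDerivWithinAt)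
    (by simpa using hft.symm)
    (fun s hs => by
      have hts : 0 ≤ t - s := by linarith [hs.2]
      rw [norm_neg, Real.norm_eq_abs, Real.norm_eq_abs, abs_of_nonneg (hf_nonneg _ hts)]
      exact (hφ _ hts).trans (mul_le_mul_of_nonneg_right
        ((le_abs_self _).trans (hC _ ⟨hts, by linarith [hs.1]⟩)) (hf_nonneg _ hts)))
  simpa using hback t ⟨ht, le_rfl⟩

theorem pos_of_ne_zero_of_continuous {f : ℝ → ℝ}
    (hf : Continuous fun t : Ici (0 : ℝ) => f t) (hne : ∀ t, 0 ≤ t → f t ≠ 0) (h0 : 0 < f 0)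
    {t : ℝ} (ht : 0 ≤ t) : 0 < f t := by
  by_contra! hle
  obtain ⟨s, hs, hfs⟩ := intermediate_value_Icc' ht
    ((continuousOn_iff_continuous_domRestrict.2 hf).mono Icc_subset_Ici_self) ⟨hle, h0.le⟩
  exact hne s hs.1 hfs

end Calculus

section EntrywiseDeriv

variable {m n p : Type*}

def HasEntrywiseDerivAt (F : ℝ → Matrix m n ℝ) (F' : Matrix m n ℝ) (t : ℝ) : Prop :=
  ∀ i j, HasDerivAt (fun s => F s i j) (F' i j) t

namespace HasEntrywiseDerivAt

variable {F G : ℝ → Matrix m n ℝ} {F' G' : Matrix m n ℝ} {t : ℝ}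

theorem continuousAt (h : HasEntrywiseDerivAt F F' t) : ContinuousAt F t :=
  continuousAt_pi.2 fun i => continuousAt_pi.2 fun j => (h i j).continuousAt

theorem transpose (h : HasEntrywiseDerivAt F F' t) :
    HasEntrywiseDerivAt (fun s => (F s)ᵀ) F'ᵀ t :=
  fun i j => h j i

theorem sub (hF : HasEntrywiseDerivAt F F' t) (hG : HasEntrywiseDerivAt G G' t) :
    HasEntrywiseDerivAt (fun s => F s - G s) (F' - G') t :=
  fun i j => (hF i j).sub (hG i j)

theorem reindex {m' n' : Type*} (h : HasEntrywiseDerivAt F F' t) (e₁ : m ≃ m')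
    (e₂ : n ≃ n') :
    HasEntrywiseDerivAt (fun s => reindex e₁ e₂ (F s)) (Matrix.reindex e₁ e₂ F') t :=
  fun i j => h (e₁.symm i) (e₂.symm j)

theorem mul [Fintype n] {H : ℝ → Matrix n p ℝ} {H' : Matrix n p ℝ}
    (hF : HasEntrywiseDerivAt F F' t) (hH : HasEntrywiseDerivAt H H' t) :
    HasEntrywiseDerivAt (fun s => F s * H s) (F' * H t + F t * H') t := by
  intro i j
  simpa [mul_apply, Finset.sum_add_distrib] using
    HasDerivAt.fun_sum (u := Finset.univ) fun k _ => (hF i k).mul (hH k j)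

theorem det_fin_two {M : ℝ → Matrix (Fin 2) (Fin 2) ℝ} {M' : Matrix (Fin 2) (Fin 2) ℝ}
    (h : HasEntrywiseDerivAt M M' t) :
    HasDerivAt (fun s => (M s).det) (trace (adjugate (M t) * M')) t := by
  have hdet : (fun s => (M s).det) = fun s => M s 0 0 * M s 1 1 - M s 0 1 * M s 1 0 :=
    funext fun s => Matrix.det_fin_two _
  rw [hdet]
  refine (((h 0 0).fun_mul (h 1 1)).fun_sub ((h 0 1).fun_mul (h 1 0))).congr_deriv ?_
  simp [adjugate_fin_two, trace_fin_two, vecMul, dotProduct, Fin.sum_univ_two]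
  ring

end HasEntrywiseDerivAt

theorem continuous_Ici_of_hasEntrywiseDerivAt {F F' : ℝ → Matrix m n ℝ}
    (h : ∀ t, 0 ≤ t → HasEntrywiseDerivAt F (F' t) t) :
    Continuous fun t : Ici (0 : ℝ) => F t :=
  continuousOn_iff_continuous_domRestrict.1 fun t ht => (h t ht).continuousAt.continuousWithinAt

end EntrywiseDeriv

section LinearAlgebra

theorem Matrix.reindex_mul {m n p m' n' p' R : Type*} [Fintype n] [Fintype n'] [Semiring R]
    (e₁ : m ≃ m') (e₂ : n ≃ n') (e₃ : p ≃ p') (M : Matrix m n R) (N : Matrix n p R) :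
    reindex e₁ e₃ (M * N) = reindex e₁ e₂ M * reindex e₂ e₃ N := by
  simp [reindex_apply, submatrix_mul_equiv]

theorem Matrix.reindex_mul_transpose {m n m' n' R : Type*} [Fintype n] [Fintype n']
    [CommSemiring R] (e : m ≃ m') (e' : n ≃ n') (M : Matrix m n R) :
    reindex e e' M * (reindex e e' M)ᵀ = reindex e e (M * Mᵀ) := by
  rw [reindex_mul e e', transpose_reindex]

variable {m n p : Type*} [Fintype m] [Fintype n] [Fintype p]

theorem Matrix.mul_pow_transpose_mul_mul_transpose {R : Type*} [CommSemiring R]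
    [DecidableEq m] [DecidableEq n] (A : Matrix m n R) (k : ℕ) :
    A * (Aᵀ * A) ^ k * Aᵀ = (A * Aᵀ) ^ (k + 1) := by
  induction k with
  | zero => simp
  | succ k ih => rw [pow_succ, pow_succ, ← ih]; simp only [Matrix.mul_assoc]

theorem Matrix.det_sq_of_mul_transpose_eq_pow {R : Type*} [CommRing R] [DecidableEq n]
    {A M : Matrix n n R} {k : ℕ} (h : A * Aᵀ = M ^ k) : A.det ^ 2 = M.det ^ k := by
  rw [sq, ← det_pow, ← h, det_mul, det_transpose]

theorem Matrix.trace_mul_transpose_sq_le (B G : Matrix m p ℝ) :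
    trace (B * Gᵀ) ^ 2 ≤ trace (B * Bᵀ) * trace (G * Gᵀ) := by
  have h (X Y : Matrix m p ℝ) : trace (X * Yᵀ) = ∑ x : m × p, X x.1 x.2 * Y x.1 x.2 := by
    simp only [trace, diag_apply, mul_apply, transpose_apply]
    exact (Fintype.sum_prod_type' fun i j => X i j * Y i j).symm
  simpa only [h, sq] using Finset.sum_mul_sq_le_sq_mul_sq Finset.univ
    (fun x : m × p => B x.1 x.2) (fun x : m × p => G x.1 x.2)

theorem Matrix.abs_trace_adjugate_mul_le [DecidableEq n] {M : Matrix n n ℝ} {A G : Matrix n p ℝ}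
    {k : ℕ} (hM : M.PosSemidef) (hA : A * Aᵀ = M ^ (k + 2)) :
    |trace (adjugate M * (G * Aᵀ + A * Gᵀ))| ≤
      (trace (M ^ k) + trace (G * Gᵀ)) * M.det := by
  have hMt : Mᵀ = M := by simpa using hM.isHermitian.eq
  set B := adjugate M * A
  have htrace : trace (adjugate M * (G * Aᵀ + A * Gᵀ)) = 2 * trace (B * Gᵀ) := by
    have : trace (adjugate M * (G * Aᵀ)) = trace (B * Gᵀ) := by
      rw [← trace_transpose, transpose_mul, transpose_mul, adjugate_transpose, hMt,
        transpose_transpose, trace_mul_comm, Matrix.mul_assoc]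
    rw [Matrix.mul_add, trace_add, this, ← Matrix.mul_assoc]
    ring
  have hBB : B * Bᵀ = M.det ^ 2 • M ^ k := by
    calc B * Bᵀ = adjugate M * (A * Aᵀ) * adjugate M := by
          simp only [B, transpose_mul, adjugate_transpose, hMt, Matrix.mul_assoc]
      _ = (adjugate M * M) * M ^ k * (M * adjugate M) := by
          rw [hA, pow_succ, pow_succ']; simp only [Matrix.mul_assoc]
      _ = M.det ^ 2 • M ^ k := by
          rw [adjugate_mul, mul_adjugate, Matrix.smul_mul, Matrix.one_mul, Matrix.mul_smul,
            Matrix.mul_one, smul_smul, sq]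
  have hx : 0 ≤ trace (M ^ k) := (hM.pow k).trace_nonneg
  have hy : 0 ≤ trace (G * Gᵀ) := by
    simpa using (posSemidef_self_mul_conjTranspose G).trace_nonneg
  have hCS := trace_mul_transpose_sq_le B G
  rw [hBB, trace_smul, smul_eq_mul] at hCS
  rw [htrace]
  refine abs_le_of_sq_le_sq ?_ (mul_nonneg (add_nonneg hx hy) hM.det_nonneg)
  nlinarith [sq_nonneg (trace (M ^ k) - trace (G * Gᵀ)), sq_nonneg M.det]

end LinearAlgebra

section RankOneDistance

theorem distRank1_le_frobNorm_sub (A : Matrix (Fin 2) (Fin 2) ℝ) {M : Matrix (Fin 2) (Fin 2) ℝ}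
    (hM : M.rank ≤ 1) : distRank1 A ≤ frobNorm (A - M) :=
  csInf_le ⟨0, by rintro _ ⟨N, -, rfl⟩; exact Real.sqrt_nonneg _⟩ ⟨M, hM, rfl⟩

theorem distRank1_le_sqrt (A : Matrix (Fin 2) (Fin 2) ℝ) :
    distRank1 A ≤ √(A 0 1 ^ 2 + A 1 1 ^ 2) := by
  refine (distRank1_le_frobNorm_sub A (rank_vecMulVec_le (fun i => A i 0) ![1, 0])).trans_eq ?_
  simp [frobNorm, Fin.sum_univ_two]

theorem distRank1_le_abs_of_det_pos (A : Matrix (Fin 2) (Fin 2) ℝ) (hbc : 0 ≤ A 0 1 * A 1 0)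
    (hdet : 0 < A.det) : distRank1 A ≤ |A 1 1| := by
  rw [det_fin_two] at hdet
  have ha : A 0 0 ≠ 0 := by rintro ha; rw [ha] at hdet; linarith
  refine (distRank1_le_frobNorm_sub A
    (rank_vecMulVec_le (fun i => A i 0) ![1, A 0 1 / A 0 0])).trans ?_
  have h01 : A 0 1 - A 0 0 * (A 0 1 / A 0 0) = 0 := by field_simp; ring
  have h11 : A 1 1 - A 1 0 * (A 0 1 / A 0 0) = (A 0 0 * A 1 1 - A 0 1 * A 1 0) / A 0 0 := by
    field_simp
  calc frobNorm (A - vecMulVec (fun i => A i 0) ![1, A 0 1 / A 0 0])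
      = √(((A 0 0 * A 1 1 - A 0 1 * A 1 0) / A 0 0) ^ 2) := by
        simp [frobNorm, Fin.sum_univ_two, h01, h11]
    _ = (A 0 0 * A 1 1 - A 0 1 * A 1 0) / |A 0 0| := by
        rw [Real.sqrt_sq_eq_abs, abs_div, abs_of_pos hdet]
    _ ≤ |A 1 1| := by
        rw [div_le_iff₀ (abs_pos.2 ha), ← abs_mul, mul_comm (A 1 1)]
        linarith [le_abs_self (A 0 0 * A 1 1)]

theorem distRank1_le_of_det_pos (A : Matrix (Fin 2) (Fin 2) ℝ) (hdet : 0 < A.det) :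
    distRank1 A ≤ 3 * √2 * √(mcLoss A) := by
  set ε := √((A 0 1 - 1) ^ 2 + (A 1 0 - 1) ^ 2 + A 1 1 ^ 2)
  have hε : 3 * √2 * √(mcLoss A) = 3 * ε := by
    rw [mul_assoc, ← Real.sqrt_mul zero_le_two, mcLoss, ← mul_assoc,
      mul_one_div_cancel two_ne_zero, one_mul]
  have hb : |A 0 1 - 1| ≤ ε := Real.abs_le_sqrt (by nlinarith)
  have hc : |A 1 0 - 1| ≤ ε := Real.abs_le_sqrt (by nlinarith)
  have hd : |A 1 1| ≤ ε := Real.abs_le_sqrt (by nlinarith)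
  rw [hε]
  rcases le_or_gt 1 ε with hε1 | hε1
  · calc distRank1 A ≤ √(A 0 1 ^ 2 + A 1 1 ^ 2) := distRank1_le_sqrt A
      _ ≤ |A 0 1| + |A 1 1| := Real.sqrt_le_iff.2 ⟨by positivity, by
          nlinarith [sq_abs (A 0 1), sq_abs (A 1 1), abs_nonneg (A 0 1), abs_nonneg (A 1 1)]⟩
      _ ≤ 3 * ε := by linarith [abs_sub_abs_le_abs_sub (A 0 1) 1, abs_one (α := ℝ)]
  · have hbc : 0 ≤ A 0 1 * A 1 0 :=
      mul_nonneg (by linarith [(abs_le.1 hb).1]) (by linarith [(abs_le.1 hc).1])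
    linarith [distRank1_le_abs_of_det_pos A hbc hdet, Real.sqrt_nonneg
      ((A 0 1 - 1) ^ 2 + (A 1 0 - 1) ^ 2 + A 1 1 ^ 2)]

end RankOneDistance

section LayeredFactorization

variable {ι : ℕ → Type*} [∀ l, Fintype (ι l)] {L : ℕ}

theorem mul_transpose_eq_pow_of_balanced [∀ l, DecidableEq (ι l)] {R : Type*} [CommSemiring R]
    {W : (l : ℕ) → Matrix (ι (l + 1)) (ι l) R} {P : (l : ℕ) → Matrix (ι l) (ι 0) R}
    (hP0 : P 0 = 1) (hPs : ∀ l < L, P (l + 1) = W l * P l)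
    (hbal : ∀ l, l + 1 < L → (W (l + 1))ᵀ * W (l + 1) = W l * (W l)ᵀ) :
    ∀ l < L, P (l + 1) * (P (l + 1))ᵀ = (W l * (W l)ᵀ) ^ (l + 1) := by
  intro l hl
  induction l with
  | zero => simp [hPs 0 hl, hP0]
  | succ l ih =>
    rw [hPs (l + 1) hl, transpose_mul, ← Matrix.mul_assoc, Matrix.mul_assoc _ (P (l + 1)),
      ih (by omega), ← hbal l hl, mul_pow_transpose_mul_mul_transpose]

theorem continuous_partialProd [∀ l, DecidableEq (ι l)] {R X : Type*} [Semiring R]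
    [TopologicalSpace R] [IsTopologicalSemiring R] [TopologicalSpace X]
    {W : (l : ℕ) → X → Matrix (ι (l + 1)) (ι l) R}
    {P : (l : ℕ) → X → Matrix (ι l) (ι 0) R}
    (hP0 : ∀ x, P 0 x = 1) (hPs : ∀ l < L, ∀ x, P (l + 1) x = W l x * P l x)
    (hW : ∀ l < L, Continuous (W l)) : ∀ l ≤ L, Continuous (P l) := by
  intro l hl
  induction l with
  | zero => simpa only [funext hP0] using continuous_const
  | succ l ih =>
    simpa only [funext (hPs l hl)] using (hW l hl).matrix_mul (ih (by omega))

theorem balanced_of_gradientFlow {W : (l : ℕ) → ℝ → Matrix (ι (l + 1)) (ι l) ℝ}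
    {P : (l : ℕ) → ℝ → Matrix (ι l) (ι 0) ℝ}
    {Q : (l : ℕ) → ℝ → Matrix (ι L) (ι l) ℝ}
    {G : ℝ → Matrix (ι L) (ι 0) ℝ}
    (hPs : ∀ l < L, ∀ t, P (l + 1) t = W l t * P l t)
    (hQs : ∀ l < L, ∀ t, Q l t = Q (l + 1) t * W l t)
    (hW : ∀ l < L, ∀ t, 0 ≤ t →
      HasEntrywiseDerivAt (W l) (-((Q (l + 1) t)ᵀ * G t * (P l t)ᵀ)) t)
    (hbal : ∀ l, l + 1 < L → (W (l + 1) 0)ᵀ * W (l + 1) 0 = W l 0 * (W l 0)ᵀ)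
    {l : ℕ} (hl : l + 1 < L) {t : ℝ} (ht : 0 ≤ t) :
    (W (l + 1) t)ᵀ * W (l + 1) t = W l t * (W l t)ᵀ := by
  set B := fun s => (W (l + 1) s)ᵀ * W (l + 1) s - W l s * (W l s)ᵀ
  have hB : ∀ s, 0 ≤ s → HasEntrywiseDerivAt B 0 s := by
    intro s hs
    have h := ((hW (l + 1) hl s hs).transpose.mul (hW (l + 1) hl s hs)).sub
      ((hW l (by omega) s hs).mul (hW l (by omega) s hs).transpose)
    convert h using 1
    rw [hQs (l + 1) hl, hPs l (by omega)]
    simp only [transpose_neg, transpose_mul, transpose_transpose, Matrix.neg_mul,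
      Matrix.mul_neg, Matrix.mul_assoc]
    abel
  have hB0 : B 0 = 0 := sub_eq_zero.2 (hbal l hl)
  refine sub_eq_zero.1 (ext fun i j => ?_)
  exact (apply_eq_apply_zero_of_hasDerivAt_zero (fun s hs => hB s hs i j) ht).trans
    (congrFun (congrFun hB0 i) j)

end LayeredFactorization

section TopLayer

variable {n : Type*} [Fintype n] {k : ℕ} {V : ℝ → Matrix (Fin 2) n ℝ}
  {Y : ℝ → Matrix n (Fin 2) ℝ} {G : ℝ → Matrix (Fin 2) (Fin 2) ℝ}

theorem det_mul_transpose_pos_of_flow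
    (hV : ∀ t, 0 ≤ t → HasEntrywiseDerivAt V (-(G t * (Y t)ᵀ)) t)
    (hG : Continuous fun t : Ici (0 : ℝ) => G t)
    (hgram : ∀ t, 0 ≤ t → V t * Y t * (V t * Y t)ᵀ = (V t * (V t)ᵀ) ^ (k + 2))
    (h0 : 0 < (V 0 * (V 0)ᵀ).det) {t : ℝ} (ht : 0 ≤ t) : 0 < (V t * (V t)ᵀ).det := by
  set M := fun t => V t * (V t)ᵀ
  have hM : ∀ t, (M t).PosSemidef := fun t => by
    simpa using posSemidef_self_mul_conjTranspose (V t)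
  have hM' : ∀ t, 0 ≤ t →
      HasEntrywiseDerivAt M (-(G t * (V t * Y t)ᵀ + V t * Y t * (G t)ᵀ)) t := by
    intro t ht
    convert (hV t ht).mul (hV t ht).transpose using 1
    simp only [transpose_neg, transpose_mul, transpose_transpose, Matrix.neg_mul, Matrix.mul_neg,
      Matrix.mul_assoc, neg_add]
  have hMc : Continuous fun t : Ici (0 : ℝ) => M t := continuous_Ici_of_hasEntrywiseDerivAt hM'
  have hc : Continuous fun t : Ici (0 : ℝ) => trace (M t ^ k) + trace (G t * (G t)ᵀ) :=
    (hMc.pow k).matrix_trace.add (hG.matrix_mul hG.matrix_transpose).matrix_trace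
  refine pos_of_abs_deriv_le_mul_self (fun t ht => (hM' t ht).det_fin_two)
    (fun t _ => (hM t).det_nonneg) (c := fun t => trace (M t ^ k) + trace (G t * (G t)ᵀ))
    (fun t ht => ?_) hc h0 ht
  rw [Matrix.mul_neg, trace_neg, abs_neg]
  exact abs_trace_adjugate_mul_le (hM t) (hgram t ht)

theorem det_mul_ne_zero_of_flow
    (hV : ∀ t, 0 ≤ t → HasEntrywiseDerivAt V (-(G t * (Y t)ᵀ)) t)
    (hG : Continuous fun t : Ici (0 : ℝ) => G t)
    (hgram : ∀ t, 0 ≤ t → V t * Y t * (V t * Y t)ᵀ = (V t * (V t)ᵀ) ^ (k + 2))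
    (h0 : (V 0 * Y 0).det ≠ 0) {t : ℝ} (ht : 0 ≤ t) : (V t * Y t).det ≠ 0 := by
  have hsq : ∀ t, 0 ≤ t → (V t * Y t).det ^ 2 = (V t * (V t)ᵀ).det ^ (k + 2) :=
    fun t ht => det_sq_of_mul_transpose_eq_pow (hgram t ht)
  have hM0 : 0 < (V 0 * (V 0)ᵀ).det := by
    refine lt_of_le_of_ne (by simpa using (posSemidef_self_mul_conjTranspose (V 0)).det_nonneg)
      fun h => h0 ?_
    simpa [← h] using hsq 0 le_rfl
  have hMt := det_mul_transpose_pos_of_flow hV hG hgram hM0 ht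
  exact fun h => (pow_pos hMt (k + 2)).ne' (by rw [← hsq t ht, h]; simp)

end TopLayer

theorem continuous_mcGrad : Continuous mcGrad :=
  continuous_matrix fun i j => by fin_cases i <;> fin_cases j <;> simp [mcGrad] <;> fun_prop

theorem dist_rank_one_upper_bound_deep_matrix_factorization_general
    (L : ℕ) (hL : 2 ≤ L)
    (d : ℕ → ℕ) (hd0 : d 0 = 2) (hdL : d L = 2)
    (W : (l : ℕ) → ℝ → Matrix (Fin (d (l + 1))) (Fin (d l)) ℝ)
    (P : (l : ℕ) → ℝ → Matrix (Fin (d l)) (Fin (d 0)) ℝ)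
    (hP0 : ∀ t, P 0 t = 1)
    (hPs : ∀ l, l < L → ∀ t, P (l + 1) t = W l t * P l t)
    (Q : (l : ℕ) → ℝ → Matrix (Fin (d L)) (Fin (d l)) ℝ)
    (hQL : ∀ t, Q L t = 1)
    (hQs : ∀ l, l < L → ∀ t, Q l t = Q (l + 1) t * W l t)
    (hGF : ∀ l, l < L → ∀ t : ℝ, 0 ≤ t → ∀ i j,
      HasDerivAt (fun s => W l s i j)
        ((-((Q (l + 1) t)ᵀ *
            Matrix.reindex (finCongr hdL).symm (finCongr hd0).symm
              (mcGrad (Matrix.reindex (finCongr hdL) (finCongr hd0) (P L t))) *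
            (P l t)ᵀ)) i j) t)
    (hbal : ∀ l, l + 1 < L → (W (l + 1) 0)ᵀ * W (l + 1) 0 = W l 0 * (W l 0)ᵀ)
    (hdet : 0 < (Matrix.reindex (finCongr hdL) (finCongr hd0) (P L 0)).det) :
    ∀ t : ℝ, 0 ≤ t →
      distRank1 (Matrix.reindex (finCongr hdL) (finCongr hd0) (P L t)) ≤
        3 * Real.sqrt 2 *
          Real.sqrt (mcLoss (Matrix.reindex (finCongr hdL) (finCongr hd0) (P L t))) := by
  obtain ⟨k, rfl⟩ : ∃ k, L = k + 2 := ⟨L - 2, by omega⟩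
  set e₁ := finCongr hdL
  set e₀ := finCongr hd0
  set A := fun t => reindex e₁ e₀ (P (k + 2) t)
  set V := fun t => reindex e₁ (Equiv.refl _) (W (k + 1) t)
  set Y := fun t => reindex (Equiv.refl _) e₀ (P (k + 1) t)
  have hAVY : ∀ t, A t = V t * Y t := fun t => by
    simp only [A, V, Y, hPs (k + 1) (by omega) t, reindex_mul e₁ (Equiv.refl _)]
  have hgram : ∀ t, 0 ≤ t → A t * (A t)ᵀ = (V t * (V t)ᵀ) ^ (k + 2) := fun t ht => by
    have hPP := mul_transpose_eq_pow_of_balanced (ι := fun l => Fin (d l)) (W := fun l => W l t)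
      (P := fun l => P l t) (hP0 t) (fun l hl => hPs l hl t)
      (fun l hl => balanced_of_gradientFlow hPs hQs hGF hbal hl ht) (k + 1) (by omega)
    simp only [A, V, reindex_mul_transpose, hPP, ← coe_reindexAlgEquiv ℝ, map_pow]
  have hV : ∀ t, 0 ≤ t → HasEntrywiseDerivAt V (-(mcGrad (A t) * (Y t)ᵀ)) t := by
    intro t ht
    have hW : HasEntrywiseDerivAt (W (k + 1)) _ t := hGF (k + 1) (by omega) t ht
    convert hW.reindex e₁ (Equiv.refl _) using 1
    rw [hQL, transpose_one, Matrix.one_mul, ← Matrix.neg_mul (reindex e₁.symm e₀.symm _),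
      reindex_mul e₁ e₀]
    change _ = -reindex e₁ e₀ ((reindex e₁ e₀).symm (mcGrad (A t))) * (Y t)ᵀ
    rw [Equiv.apply_symm_apply, Matrix.neg_mul]
  have hWc : ∀ l < k + 2, Continuous fun t : Ici (0 : ℝ) => W l t :=
    fun l hl => continuous_Ici_of_hasEntrywiseDerivAt (hGF l hl)
  have hA : Continuous fun t : Ici (0 : ℝ) => A t :=
    (continuous_partialProd (ι := fun l => Fin (d l)) (P := fun l (t : Ici (0 : ℝ)) => P l t)
      (fun t => hP0 t) (fun l hl t => hPs l hl t) hWc (k + 2) le_rfl).matrix_reindex e₁ e₀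
  have hdetA : ∀ t, 0 ≤ t → (A t).det ≠ 0 := fun t ht => by
    rw [hAVY]
    exact det_mul_ne_zero_of_flow hV (continuous_mcGrad.comp hA)
      (fun t ht => hAVY t ▸ hgram t ht) (hAVY 0 ▸ hdet.ne') ht
  exact fun t ht =>
    distRank1_le_of_det_pos _ (pos_of_ne_zero_of_continuous hA.matrix_det hdetA hdet ht)

/-- **Distance of the product matrix from rank one is controlled by the loss.**
Gradient flow on a depth-`L` matrix factorization (`L ≥ 2`) for the 2×2
matrix-completion loss with balanced initialization and `det(W_{L:1}(0)) > 0`: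
for every `t ≥ 0`, `D(W_{L:1}(t), M₁) ≤ 3√2·√ℓ(t)`. -/
theorem dist_rank_one_upper_bound_deep_matrix_factorization
    (L : ℕ) (hL : 2 ≤ L)
    (d : ℕ → ℕ) (hd0 : d 0 = 2) (hdL : d L = 2)
    (hhid : ∀ l, 1 ≤ l → l ≤ L - 1 → 2 ≤ d l)
    (W : (l : ℕ) → ℝ → Matrix (Fin (d (l + 1))) (Fin (d l)) ℝ)
    (P : (l : ℕ) → ℝ → Matrix (Fin (d l)) (Fin (d 0)) ℝ)
    (hP0 : ∀ t, P 0 t = 1)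
    (hPs : ∀ l, l < L → ∀ t, P (l + 1) t = W l t * P l t)
    (Q : (l : ℕ) → ℝ → Matrix (Fin (d L)) (Fin (d l)) ℝ)
    (hQL : ∀ t, Q L t = 1)
    (hQs : ∀ l, l < L → ∀ t, Q l t = Q (l + 1) t * W l t)
    (hGF : ∀ l, l < L → ∀ t : ℝ, 0 ≤ t → ∀ i j,
      HasDerivAt (fun s => W l s i j)
        ((-((Q (l + 1) t)ᵀ *
            Matrix.reindex (finCongr hdL).symm (finCongr hd0).symm
              (mcGrad (Matrix.reindex (finCongr hdL) (finCongr hd0) (P L t))) *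
            (P l t)ᵀ)) i j) t)
    (hbal : ∀ l, l + 1 < L → (W (l + 1) 0)ᵀ * W (l + 1) 0 = W l 0 * (W l 0)ᵀ)
    (hdet : 0 < (Matrix.reindex (finCongr hdL) (finCongr hd0) (P L 0)).det) :
    ∀ t : ℝ, 0 ≤ t →
      distRank1 (Matrix.reindex (finCongr hdL) (finCongr hd0) (P L t)) ≤
        3 * Real.sqrt 2 *
          Real.sqrt (mcLoss (Matrix.reindex (finCongr hdL) (finCongr hd0) (P L t))) :=
  dist_rank_one_upper_bound_deep_matrix_factorization_general L hL d hd0 hdL W P hP0 hPs Q hQL hQs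
    hGF hbal hdet
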